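/- Let m ≥ 1 be a natural number. Then for every natural number a, |{x ∈ B_{m,m} : τ(x) = m + a}| = |{x ∈ B_{m,m} : τ(x) = m − a}|. Equivalently, if X is sampled uniformly at random from B_{m,m}, then P(τ(X) = m + a) = P(τ(X) = m − a) for all a ∈ ℕ. -/

import Mathlib

/-!
A word of `B_{m,m}` is determined by its first letter together with the compositions `A` and `B`
of `m` formed by the lengths of its runs of `0`s and of `1`s; the numbers of parts of `A` and `B`
differ by at most one, and `τ + 1` is their sum. The dual of a composition of `m` (the one whose
set of cut points is the complement) has `m + 1 - k` parts when the original has `k`. Replacing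
both `A` and `B` by their duals is therefore an involution of `B_{m,m}` sending `τ` to `2m - τ`.
-/

/-- The number of jumps `τ(x) = |{i ∈ [n-1] : x_i ≠ x_{i+1}}|` of a binary sequence
`x ∈ {0,1}^n`. -/
def tau {n : ℕ} (x : Fin n → Bool) : ℕ :=
  (Finset.univ.filter (fun i : Fin n =>
    ∃ h : (i : ℕ) + 1 < n, x i ≠ x ⟨(i : ℕ) + 1, h⟩)).card

/-- `B_{n0,n1}`, the set of binary sequences of length `n0 + n1` with exactly
`n0` zeros and `n1` ones. -/
def Bseq (n0 n1 : ℕ) : Finset (Fin (n0 + n1) → Bool) :=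
  Finset.univ.filter (fun x =>
    (Finset.univ.filter (fun i => x i = false)).card = n0 ∧
    (Finset.univ.filter (fun i => x i = true)).card = n1)

namespace List

variable {α : Type*}

mutual
def evens : List α → List α
  | [] => []
  | a :: l => a :: odds l
def odds : List α → List α
  | [] => []
  | _ :: l => evens l
end

@[simp] theorem evens_nil : evens ([] : List α) = [] := by simp [evens]
@[simp] theorem odds_nil : odds ([] : List α) = [] := by simp [odds]
@[simp] theorem evens_cons (a : α) (l : List α) : evens (a :: l) = a :: odds l := by simp [evens]
@[simp] theorem odds_cons (a : α) (l : List α) : odds (a :: l) = evens l := by simp [odds]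

theorem interleave_evens_odds (l : List α) : (evens l).interleave (odds l) = l := by
  induction l with
  | nil => simp
  | cons a l ih => simp [ih]

theorem length_evens_odds (l : List α) :
    (evens l).length = (l.length + 1) / 2 ∧ (odds l).length = l.length / 2 := by
  induction l with
  | nil => simp
  | cons a l ih => simp only [evens_cons, odds_cons, length_cons, ih, and_true]; omega

theorem evens_sublist_odds_sublist (l : List α) : evens l <+ l ∧ odds l <+ l := by
  induction l with
  | nil => simp
  | cons a l ih => exact ⟨ih.2.cons_cons a, ih.1.cons a⟩

theorem evens_odds_interleave {A B : List α} (h₁ : B.length ≤ A.length)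
    (h₂ : A.length ≤ B.length + 1) :
    evens (A.interleave B) = A ∧ odds (A.interleave B) = B := by
  induction A, B using interleave.induct with
  | case1 B => simp_all
  | case2 a A B ih =>
    simp only [length_cons] at h₁ h₂
    obtain ⟨hB, hA⟩ := ih (by omega) (by omega)
    simp [hA, hB]

end List

namespace BinarySeq

open List

def jumps : List Bool → ℕ
  | [] => 0
  | [_] => 0
  | a :: b :: l => (if a = b then 0 else 1) + jumps (b :: l)

def ofRuns : Bool → List ℕ → List Bool
  | _, [] => []
  | s, a :: R => replicate a s ++ ofRuns (!s) R

/-- The run lengths of `replicate k a ++ l`. -/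
def runsFrom (a : Bool) (k : ℕ) : List Bool → List ℕ
  | [] => [k]
  | b :: l => if b = a then runsFrom a (k + 1) l else k :: runsFrom b 1 l

def runs : List Bool → List ℕ
  | [] => []
  | a :: l => runsFrom a 1 l

@[simp] theorem ofRuns_nil (s : Bool) : ofRuns s [] = [] := rfl

theorem ofRuns_cons_succ (s : Bool) (a : ℕ) (R : List ℕ) :
    ofRuns s ((a + 1) :: R) = s :: (replicate a s ++ ofRuns (!s) R) := by
  simp [ofRuns, replicate_succ]

@[simp] theorem length_ofRuns (s : Bool) (R : List ℕ) : (ofRuns s R).length = R.sum := by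
  induction R generalizing s with
  | nil => rfl
  | cons a R ih => simp [ofRuns, ih]

theorem count_ofRuns (s : Bool) (R : List ℕ) :
    (ofRuns s R).count s = (evens R).sum ∧ (ofRuns s R).count (!s) = (odds R).sum := by
  induction R generalizing s with
  | nil => simp
  | cons a R ih =>
    have := ih (!s)
    rw [Bool.not_not] at this
    simp [ofRuns, count_replicate, this]

theorem ofRuns_runsFrom (a : Bool) (k : ℕ) (l : List Bool) :
    ofRuns a (runsFrom a k l) = replicate k a ++ l := by
  induction l generalizing a k with
  | nil => simp [runsFrom, ofRuns]
  | cons b l ih =>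
    by_cases hb : b = a
    · subst hb
      simp [runsFrom, ih, replicate_succ']
    · have : (!a) = b := by cases a <;> cases b <;> simp_all
      simp [runsFrom, hb, ofRuns, this, ih]

theorem ofRuns_runs {s : Bool} {l : List Bool} (hs : ∀ a ∈ l.head?, a = s) :
    ofRuns s (runs l) = l := by
  cases l with
  | nil => rfl
  | cons a l =>
    obtain rfl : a = s := hs a rfl
    simp [runs, ofRuns_runsFrom]

theorem sum_runsFrom (a : Bool) (k : ℕ) (l : List Bool) :
    (runsFrom a k l).sum = k + l.length := by
  induction l generalizing a k with
  | nil => simp [runsFrom]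
  | cons b l ih =>
    unfold runsFrom
    split_ifs <;> simp [ih] <;> omega

theorem sum_runs (l : List Bool) : (runs l).sum = l.length := by
  cases l <;> simp [runs, sum_runsFrom, add_comm]

theorem pos_of_mem_runsFrom (a : Bool) {k : ℕ} (hk : 0 < k) (l : List Bool) :
    ∀ x ∈ runsFrom a k l, 0 < x := by
  induction l generalizing a k with
  | nil => simpa [runsFrom]
  | cons b l ih =>
    unfold runsFrom
    split_ifs
    · exact ih a (by omega)
    · simpa [hk] using ih b one_pos

theorem pos_of_mem_runs (l : List Bool) : ∀ x ∈ runs l, 0 < x := by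
  cases l with
  | nil => simp [runs]
  | cons a l => exact pos_of_mem_runsFrom a one_pos l

theorem length_runsFrom (a : Bool) (k : ℕ) (l : List Bool) :
    (runsFrom a k l).length = jumps (a :: l) + 1 := by
  induction l generalizing a k with
  | nil => simp [runsFrom, jumps]
  | cons b l ih =>
    unfold runsFrom
    by_cases hb : b = a
    · subst hb; simp [ih, jumps]
    · simp [hb, ih, jumps, eq_comm (a := a)]; omega

theorem length_runs {l : List Bool} (hl : l ≠ []) : (runs l).length = jumps l + 1 := by
  cases l with
  | nil => contradiction
  | cons a l => exact length_runsFrom a 1 l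

theorem runsFrom_replicate_append (a : Bool) (k j : ℕ) (l : List Bool) :
    runsFrom a k (replicate j a ++ l) = runsFrom a (k + j) l := by
  induction j generalizing k with
  | zero => rfl
  | succ j ih =>
    rw [replicate_succ, cons_append, runsFrom, if_pos rfl, ih]
    congr 1
    omega

theorem runsFrom_ofRuns (s : Bool) (k : ℕ) {R : List ℕ} (hR : ∀ a ∈ R, 0 < a) :
    runsFrom s k (ofRuns (!s) R) = k :: R := by
  induction R generalizing s k with
  | nil => rfl
  | cons a R ih =>
    obtain ⟨c, rfl⟩ : ∃ c, a = c + 1 := Nat.exists_eq_add_one.mpr (hR a mem_cons_self)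
    have := ih (!s) (c + 1) (fun b hb => hR b (mem_cons_of_mem _ hb))
    rw [Bool.not_not] at this
    simp [ofRuns_cons_succ, runsFrom, runsFrom_replicate_append, this, add_comm]

theorem runs_ofRuns (s : Bool) {R : List ℕ} (hR : ∀ a ∈ R, 0 < a) :
    runs (ofRuns s R) = R := by
  cases R with
  | nil => rfl
  | cons a R =>
    obtain ⟨c, rfl⟩ : ∃ c, a = c + 1 := Nat.exists_eq_add_one.mpr (hR a mem_cons_self)
    have := runsFrom_ofRuns s (1 + c) (fun b hb => hR b (mem_cons_of_mem _ hb))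
    rw [ofRuns_cons_succ, runs, runsFrom_replicate_append, this, add_comm]

def flipAlt : Bool → List Bool → List Bool
  | _, [] => []
  | b, c :: l => (b ^^ c) :: flipAlt (!b) l

@[simp] theorem length_flipAlt (b : Bool) (l : List Bool) : (flipAlt b l).length = l.length := by
  induction l generalizing b <;> simp [flipAlt, *]

@[simp] theorem flipAlt_flipAlt (b : Bool) (l : List Bool) : flipAlt b (flipAlt b l) = l := by
  induction l generalizing b <;> simp [flipAlt, *]

theorem head?_flipAlt_false (l : List Bool) : (flipAlt false l).head? = l.head? := by
  cases l <;> simp [flipAlt]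

theorem jumps_flipAlt_add_jumps (b : Bool) {l : List Bool} (hl : l ≠ []) :
    jumps (flipAlt b l) + jumps l + 1 = l.length := by
  induction l generalizing b with
  | nil => contradiction
  | cons c l ih =>
    cases l with
    | nil => simp [flipAlt, jumps]
    | cons d l =>
      have := ih (!b) (cons_ne_nil d l)
      simp only [flipAlt] at this ⊢
      simp only [jumps, length_cons] at this ⊢
      cases b <;> cases c <;> cases d <;> simp at this ⊢ <;> omega

/-- A composition of `n` is the run-length encoding of a word of length `n`; flipping every
other letter exchanges jumps and non-jumps, so the cut points of `dual L` are the non-cut points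
of `L`. -/
def dual (L : List ℕ) : List ℕ := runs (flipAlt false (ofRuns false L))

theorem pos_of_mem_dual (L : List ℕ) : ∀ a ∈ dual L, 0 < a := pos_of_mem_runs _

theorem sum_dual (L : List ℕ) : (dual L).sum = L.sum := by
  simp [dual, sum_runs]

theorem length_dual_add_length {L : List ℕ} (hpos : ∀ a ∈ L, 0 < a) (hL : L ≠ []) :
    (dual L).length + L.length = L.sum + 1 := by
  have hw : ofRuns false L ≠ [] := by
    obtain ⟨a, L, rfl⟩ := exists_cons_of_ne_nil hL
    obtain ⟨c, rfl⟩ := Nat.exists_eq_add_one.mpr (hpos a mem_cons_self)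
    simp [ofRuns_cons_succ]
  have hL' : L.length = jumps (ofRuns false L) + 1 := by
    rw [← length_runs hw, runs_ofRuns false hpos]
  rw [dual, length_runs (by simpa [← length_eq_zero_iff] using hw), hL']
  have := jumps_flipAlt_add_jumps false hw
  simp only [length_ofRuns] at this
  omega

theorem dual_dual {L : List ℕ} (hpos : ∀ a ∈ L, 0 < a) : dual (dual L) = L := by
  have hhead : ∀ a ∈ (flipAlt false (ofRuns false L)).head?, a = false := by
    rw [head?_flipAlt_false]
    rcases L with _ | ⟨a, L⟩
    · simp
    · obtain ⟨c, rfl⟩ := Nat.exists_eq_add_one.mpr (hpos a mem_cons_self)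
      simp [ofRuns_cons_succ]
  rw [dual, dual, ofRuns_runs hhead, flipAlt_flipAlt, runs_ofRuns false hpos]

/-- The word whose runs of `s` have lengths `A` and whose runs of `!s` have lengths `B`; it starts
with `s` unless `B` has more runs than `A`. -/
def merge (s : Bool) (A B : List ℕ) : List Bool :=
  if B.length ≤ A.length then ofRuns s (A.interleave B) else ofRuns (!s) (B.interleave A)

theorem merge_comm (s : Bool) {A B : List ℕ} (h : A.length ≠ B.length) :
    merge (!s) B A = merge s A B := by
  unfold merge
  split_ifs <;> first | omega | simp

def jumpDual : List Bool → List Bool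
  | [] => []
  | s :: l => merge s (dual (evens (runs (s :: l)))) (dual (odds (runs (s :: l))))

theorem jumpDual_ofRuns (s : Bool) {R : List ℕ} (hR : ∀ a ∈ R, 0 < a) :
    jumpDual (ofRuns s R) = merge s (dual (evens R)) (dual (odds R)) := by
  rcases R with _ | ⟨a, R⟩
  · simp [jumpDual, merge, dual, runs, flipAlt]
  · obtain ⟨c, rfl⟩ := Nat.exists_eq_add_one.mpr (hR a mem_cons_self)
    have h := runs_ofRuns s hR
    rw [ofRuns_cons_succ] at h ⊢
    rw [jumpDual, h]

/-- `A` and `B` can be the run lengths of the two letters of a word with `m` copies of each. -/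
structure IsRunPair (m : ℕ) (A B : List ℕ) : Prop where
  pos_left : ∀ a ∈ A, 0 < a
  pos_right : ∀ b ∈ B, 0 < b
  sum_left : A.sum = m
  sum_right : B.sum = m
  length_left_le : A.length ≤ B.length + 1
  length_right_le : B.length ≤ A.length + 1

namespace IsRunPair

variable {m : ℕ} {A B : List ℕ}

theorem left_ne_nil (h : IsRunPair m A B) (hm : 0 < m) : A ≠ [] := by
  rintro rfl
  exact hm.ne h.sum_left

theorem right_ne_nil (h : IsRunPair m A B) (hm : 0 < m) : B ≠ [] := by
  rintro rfl
  exact hm.ne h.sum_right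

theorem length_dual_add_length_left (h : IsRunPair m A B) (hm : 0 < m) :
    (BinarySeq.dual A).length + A.length = m + 1 := by
  rw [length_dual_add_length h.pos_left (h.left_ne_nil hm), h.sum_left]

theorem length_dual_add_length_right (h : IsRunPair m A B) (hm : 0 < m) :
    (BinarySeq.dual B).length + B.length = m + 1 := by
  rw [length_dual_add_length h.pos_right (h.right_ne_nil hm), h.sum_right]

theorem symm (h : IsRunPair m A B) : IsRunPair m B A :=
  ⟨h.pos_right, h.pos_left, h.sum_right, h.sum_left, h.length_right_le, h.length_left_le⟩

theorem dual (h : IsRunPair m A B) (hm : 0 < m) : IsRunPair m (dual A) (dual B) := by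
  have := h.length_dual_add_length_left hm
  have := h.length_dual_add_length_right hm
  have := h.length_left_le
  have := h.length_right_le
  exact ⟨pos_of_mem_dual A, pos_of_mem_dual B, by rw [sum_dual, h.sum_left],
    by rw [sum_dual, h.sum_right], by omega, by omega⟩

theorem pos_of_mem_interleave (h : IsRunPair m A B) : ∀ a ∈ A.interleave B, 0 < a := by
  intro a ha
  rcases mem_append.mp (interleave_perm_append.mem_iff.mp ha) with ha | ha
  exacts [h.pos_left a ha, h.pos_right a ha]

theorem count_ofRuns_interleave (h : IsRunPair m A B) (hle : B.length ≤ A.length)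
    (s : Bool) :
    (ofRuns s (A.interleave B)).count s = m ∧ (ofRuns s (A.interleave B)).count (!s) = m := by
  obtain ⟨hA, hB⟩ := evens_odds_interleave hle h.length_left_le
  rw [(count_ofRuns s _).1, (count_ofRuns s _).2, hA, hB, h.sum_left, h.sum_right]
  exact ⟨rfl, rfl⟩

theorem jumps_ofRuns_interleave (h : IsRunPair m A B) (hm : 0 < m) (s : Bool) :
    jumps (ofRuns s (A.interleave B)) + 1 = A.length + B.length := by
  rw [← length_interleave, ← length_runs, runs_ofRuns s h.pos_of_mem_interleave]
  rw [← length_pos_iff, length_ofRuns, interleave_perm_append.sum_eq, sum_append, h.sum_left,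
    h.sum_right]
  omega

theorem jumpDual_ofRuns_interleave (h : IsRunPair m A B) (hle : B.length ≤ A.length)
    (s : Bool) :
    jumpDual (ofRuns s (A.interleave B)) = merge s (BinarySeq.dual A) (BinarySeq.dual B) := by
  obtain ⟨hA, hB⟩ := evens_odds_interleave hle h.length_left_le
  rw [jumpDual_ofRuns s h.pos_of_mem_interleave, hA, hB]

theorem count_merge (h : IsRunPair m A B) (s b : Bool) : (merge s A B).count b = m := by
  unfold merge
  split_ifs with hle
  · have := h.count_ofRuns_interleave hle s
    cases b <;> cases s <;> simp_all
  · have := h.symm.count_ofRuns_interleave (by omega) (!s)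
    cases b <;> cases s <;> simp_all

theorem jumps_merge (h : IsRunPair m A B) (hm : 0 < m) (s : Bool) :
    jumps (merge s A B) + 1 = A.length + B.length := by
  unfold merge
  split_ifs
  · exact h.jumps_ofRuns_interleave hm s
  · rw [h.symm.jumps_ofRuns_interleave hm, add_comm]

theorem jumpDual_merge (h : IsRunPair m A B) (hm : 0 < m) (s : Bool) :
    jumpDual (merge s A B) = merge s (BinarySeq.dual A) (BinarySeq.dual B) := by
  rw [merge]
  split_ifs with hle
  · exact h.jumpDual_ofRuns_interleave hle s
  · rw [h.symm.jumpDual_ofRuns_interleave (by omega), merge_comm]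
    have := h.length_dual_add_length_left hm
    have := h.length_dual_add_length_right hm
    omega

end IsRunPair

section Balanced

variable {m : ℕ} {l : List Bool}

theorem exists_isRunPair_merge (hl : ∀ b, l.count b = m) (hm : 0 < m) :
    ∃ s A B, IsRunPair m A B ∧ l = merge s A B := by
  obtain ⟨s, t, rfl⟩ : ∃ s t, l = s :: t := by
    rcases l with _ | ⟨s, t⟩
    · simpa [← hl false] using hm.ne
    · exact ⟨s, t, rfl⟩
  set R := runs (s :: t)
  have hR : ofRuns s R = s :: t := ofRuns_runs (by simp)
  have hcount := count_ofRuns s R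
  have hlen := length_evens_odds R
  have hsub := evens_sublist_odds_sublist R
  rw [hR, hl, hl] at hcount
  refine ⟨s, evens R, odds R,
    ⟨fun a ha => pos_of_mem_runs _ a (hsub.1.subset ha),
      fun a ha => pos_of_mem_runs _ a (hsub.2.subset ha),
      hcount.1.symm, hcount.2.symm, by omega, by omega⟩, ?_⟩
  rw [merge, if_pos (by omega), interleave_evens_odds, hR]

theorem count_jumpDual (hl : ∀ b, l.count b = m) (hm : 0 < m) (b : Bool) :
    (jumpDual l).count b = m := by
  obtain ⟨s, A, B, h, rfl⟩ := exists_isRunPair_merge hl hm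
  rw [h.jumpDual_merge hm, (h.dual hm).count_merge]

theorem jumps_jumpDual_add_jumps (hl : ∀ b, l.count b = m) (hm : 0 < m) :
    jumps (jumpDual l) + jumps l = 2 * m := by
  obtain ⟨s, A, B, h, rfl⟩ := exists_isRunPair_merge hl hm
  have := h.length_dual_add_length_left hm
  have := h.length_dual_add_length_right hm
  have := h.jumps_merge hm s
  have := (h.dual hm).jumps_merge hm s
  rw [h.jumpDual_merge hm]
  omega

theorem jumps_pos (hl : ∀ b, l.count b = m) (hm : 0 < m) : 0 < jumps l := by
  obtain ⟨s, A, B, h, rfl⟩ := exists_isRunPair_merge hl hm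
  have := h.jumps_merge hm s
  have := length_pos_of_ne_nil (h.left_ne_nil hm)
  have := length_pos_of_ne_nil (h.right_ne_nil hm)
  omega

theorem jumpDual_jumpDual (hl : ∀ b, l.count b = m) (hm : 0 < m) :
    jumpDual (jumpDual l) = l := by
  obtain ⟨s, A, B, h, rfl⟩ := exists_isRunPair_merge hl hm
  rw [h.jumpDual_merge hm, (h.dual hm).jumpDual_merge hm, dual_dual h.pos_left,
    dual_dual h.pos_right]

end Balanced

end BinarySeq

open List BinarySeq

theorem card_filter_eq_count_ofFn {α : Type*} [DecidableEq α] {n : ℕ} (x : Fin n → α)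
    (b : α) :
    (Finset.univ.filter (fun i => x i = b)).card = (ofFn x).count b := by
  induction n with
  | zero => simp
  | succ n ih =>
    rw [ofFn_succ, count_cons, Finset.card_filter, Fin.sum_univ_succ, ← Finset.card_filter,
      ih (fun i => x i.succ)]
    simp [add_comm]

theorem tau_succ_succ {n : ℕ} (x : Fin (n + 2) → Bool) :
    tau x = (if x 0 = x 1 then 0 else 1) + tau (Fin.tail x) := by
  rw [tau, tau, Finset.card_filter, Finset.card_filter, Fin.sum_univ_succ]
  simp [Fin.tail, Fin.val_succ]

theorem tau_eq_jumps_ofFn {n : ℕ} (x : Fin n → Bool) : tau x = jumps (ofFn x) := by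
  induction n with
  | zero => simp [tau, jumps]
  | succ n ih =>
    rcases n with _ | n
    · rw [tau, ofFn_succ, ofFn_zero, jumps, Finset.card_eq_zero, Finset.filter_eq_empty_iff]
      rintro i - ⟨h, -⟩
      omega
    · rw [tau_succ_succ, ih, ofFn_succ, ofFn_succ]
      simp [jumps, Fin.tail]

theorem card_filter_eq_card_filter_of_involution {α : Type*} {s : Finset α} {p q : α → Prop}
    [DecidablePred p] [DecidablePred q] (f : α → α) (hf : ∀ x ∈ s, f x ∈ s)
    (hff : ∀ x ∈ s, f (f x) = x) (hpq : ∀ x ∈ s, p x ↔ q (f x)) :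
    (s.filter p).card = (s.filter q).card := by
  refine Finset.card_nbij' f f (fun x hx => ?_) (fun x hx => ?_) (fun x hx => ?_) fun x hx => ?_
  · simp only [Finset.coe_filter, Set.mem_ofPred_eq] at hx ⊢
    exact ⟨hf x hx.1, (hpq x hx.1).1 hx.2⟩
  · simp only [Finset.coe_filter, Set.mem_ofPred_eq] at hx ⊢
    exact ⟨hf x hx.1, (hpq _ (hf x hx.1)).2 (by rw [hff x hx.1]; exact hx.2)⟩
  · exact hff x (Finset.mem_filter.1 hx).1
  · exact hff x (Finset.mem_filter.1 hx).1

theorem mem_Bseq_iff {m : ℕ} {x : Fin (m + m) → Bool} :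
    x ∈ Bseq m m ↔ ∀ b, (ofFn x).count b = m := by
  simp [Bseq, card_filter_eq_count_ofFn, Bool.forall_bool]

def jumpDualFn {n : ℕ} (x : Fin n → Bool) : Fin n → Bool :=
  fun i => (jumpDual (ofFn x)).getD i false

section Bseq

variable {m : ℕ} {x : Fin (m + m) → Bool}

theorem ofFn_jumpDualFn (hm : 0 < m) (hx : x ∈ Bseq m m) :
    ofFn (jumpDualFn x) = jumpDual (ofFn x) := by
  rw [mem_Bseq_iff] at hx
  have hlen : (jumpDual (ofFn x)).length = m + m := by
    rw [← count_false_add_count_true, count_jumpDual hx hm, count_jumpDual hx hm]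
  apply ext_getElem (by simp [hlen])
  intro i _ hi
  simp [jumpDualFn, getElem?_eq_getElem hi]

theorem jumpDualFn_mem_Bseq (hm : 0 < m) (hx : x ∈ Bseq m m) : jumpDualFn x ∈ Bseq m m := by
  rw [mem_Bseq_iff, ofFn_jumpDualFn hm hx]
  exact count_jumpDual (mem_Bseq_iff.1 hx) hm

theorem tau_jumpDualFn_add_tau (hm : 0 < m) (hx : x ∈ Bseq m m) :
    tau (jumpDualFn x) + tau x = 2 * m := by
  rw [tau_eq_jumps_ofFn, tau_eq_jumps_ofFn, ofFn_jumpDualFn hm hx]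
  exact jumps_jumpDual_add_jumps (mem_Bseq_iff.1 hx) hm

theorem tau_pos (hm : 0 < m) (hx : x ∈ Bseq m m) : 0 < tau x := by
  rw [tau_eq_jumps_ofFn]
  exact jumps_pos (mem_Bseq_iff.1 hx) hm

theorem jumpDualFn_jumpDualFn (hm : 0 < m) (hx : x ∈ Bseq m m) :
    jumpDualFn (jumpDualFn x) = x := by
  apply ofFn_injective
  rw [ofFn_jumpDualFn hm (jumpDualFn_mem_Bseq hm hx), ofFn_jumpDualFn hm hx,
    jumpDual_jumpDual (mem_Bseq_iff.1 hx) hm]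

end Bseq

theorem stmt_6 (m : ℕ) (hm : 1 ≤ m) (a : ℕ) :
    ((Bseq m m).filter (fun x => tau x = m + a)).card =
      ((Bseq m m).filter (fun x => tau x = m - a)).card := by
  refine card_filter_eq_card_filter_of_involution jumpDualFn
    (fun x hx => jumpDualFn_mem_Bseq hm hx) (fun x hx => jumpDualFn_jumpDualFn hm hx)
    fun x hx => ?_
  have := tau_jumpDualFn_add_tau hm hx
  have := tau_pos hm (jumpDualFn_mem_Bseq hm hx)
  omega
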